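/- arXiv:2403.14942 — 3 statements merged into one kernel-verified Lean document; each statement's English description precedes it below -/
import Mathlib

section
/- Let p ∈ ℤ_{>0}, let a₁, …, a_p, b₁, …, b_p ∈ ℂ, and let N ∈ ℤ_{>0} be such that Re(b_j + N + 1) > 0 for 1 ≤ j ≤ p. Then there exist constants C > 0 and γ > 0, independent of ℓ, N and z, such that for all integers ℓ ≥ N+1 and all z ∈ ℂ, |ₚFₚ[a₁+ℓ, …, a_p+ℓ; b₁+ℓ, …, b_p+ℓ; z]| ≤ C e^{γ|z|}. -/
/-- The Pochhammer symbol `(a)_n = a (a+1) ⋯ (a+n-1)`. -/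
noncomputable def poch (a : ℂ) (n : ℕ) : ℂ := ∏ i ∈ Finset.range n, (a + i)

/-- The generalized hypergeometric function `ₚFₚ[a₁,…,a_p; b₁,…,b_p; z]`. -/
noncomputable def pFp {p : ℕ} (a b : Fin p → ℂ) (z : ℂ) : ℂ :=
  ∑' n : ℕ, (∏ i, poch (a i) n) / (∏ j, poch (b j) n) * z ^ n / Nat.factorial n

/-!
The series is dominated termwise by the exponential series: if `‖aⱼ + k‖ ≤ cⱼ ‖bⱼ + k‖` for all
`k ∈ ℕ`, then `‖(aⱼ)ₙ‖ ≤ cⱼⁿ ‖(bⱼ)ₙ‖`, so the `n`-th term is at most `(γ ‖z‖)ⁿ / n!` with `γ = ∏ cⱼ`.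
For shifted parameters, `‖a + m‖ ≤ ‖a‖ + m ≤ (Re b + m) + max (‖a‖ - Re b) 0`, and `Re b + m` is at
least the least positive element `δ` of `Re b + ℤ` as soon as it is positive; hence
`c = 1 + max (‖a‖ - Re b) 0 / δ` works for every shift at once.
-/

open Finset

-- `1 - fract (-x)` is the least positive element of `x + ℤ`.
lemma one_sub_fract_neg_le_add {x : ℝ} {m : ℤ} (h : 0 < x + m) : 1 - Int.fract (-x) ≤ x + m := by
  have hm : ⌊-x⌋ + 1 ≤ m := Int.floor_lt.2 (by linarith)
  have : ((⌊-x⌋ : ℤ) : ℝ) + 1 ≤ m := by exact_mod_cast hm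
  rw [Int.fract]
  linarith

noncomputable def shiftRatioBound (a b : ℂ) : ℝ :=
  1 + max (‖a‖ - b.re) 0 / (1 - Int.fract (-b.re))

lemma one_le_shiftRatioBound (a b : ℂ) : 1 ≤ shiftRatioBound a b :=
  le_add_of_nonneg_right <|
    div_nonneg (le_max_right _ _) (sub_nonneg.2 (Int.fract_lt_one _).le)

lemma norm_add_natCast_le_shiftRatioBound_mul {a b : ℂ} {m : ℕ} (h : 0 < b.re + m) :
    ‖a + m‖ ≤ shiftRatioBound a b * ‖b + m‖ := by
  set δ := 1 - Int.fract (-b.re)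
  set M := max (‖a‖ - b.re) 0
  have hδ : 0 < δ := sub_pos.2 (Int.fract_lt_one _)
  have hδle : δ ≤ b.re + m := by
    have := one_sub_fract_neg_le_add (x := b.re) (m := m) (by rwa [Int.cast_natCast])
    rwa [Int.cast_natCast] at this
  have hM : M ≤ M / δ * (b.re + m) := by
    calc M = M / δ * δ := (div_mul_cancel₀ M hδ.ne').symm
      _ ≤ M / δ * (b.re + m) := by gcongr
  calc ‖a + m‖ ≤ ‖a‖ + m := by simpa using norm_add_le a (m : ℂ)
    _ ≤ (b.re + m) + M := by linarith [le_max_left (‖a‖ - b.re) 0]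
    _ ≤ shiftRatioBound a b * (b.re + m) := by rw [shiftRatioBound]; linarith
    _ ≤ shiftRatioBound a b * ‖b + m‖ := by
        gcongr
        · linarith [one_le_shiftRatioBound a b]
        · simpa using Complex.re_le_norm (b + m)

lemma norm_poch_le_pow_mul {a b : ℂ} {c : ℝ} (h : ∀ k : ℕ, ‖a + k‖ ≤ c * ‖b + k‖) (n : ℕ) :
    ‖poch a n‖ ≤ c ^ n * ‖poch b n‖ := by
  simp only [poch, norm_prod]
  calc ∏ k ∈ range n, ‖a + k‖ ≤ ∏ k ∈ range n, (c * ‖b + k‖) :=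
        prod_le_prod (fun _ _ => norm_nonneg _) fun k _ => h k
    _ = c ^ n * ∏ k ∈ range n, ‖b + k‖ := by rw [prod_mul_distrib, prod_const, card_range]

lemma norm_prod_poch_le_pow_mul {p : ℕ} {a b : Fin p → ℂ} {c : Fin p → ℝ}
    (h : ∀ i (k : ℕ), ‖a i + k‖ ≤ c i * ‖b i + k‖) (n : ℕ) :
    ‖∏ i, poch (a i) n‖ ≤ (∏ i, c i) ^ n * ‖∏ i, poch (b i) n‖ := by
  simp only [norm_prod]
  calc ∏ i, ‖poch (a i) n‖ ≤ ∏ i, (c i ^ n * ‖poch (b i) n‖) :=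
        prod_le_prod (fun _ _ => norm_nonneg _) fun i _ => norm_poch_le_pow_mul (h i) n
    _ = (∏ i, c i) ^ n * ∏ i, ‖poch (b i) n‖ := by rw [prod_mul_distrib, prod_pow]

lemma norm_pFp_le_exp {p : ℕ} {a b : Fin p → ℂ} {c : Fin p → ℝ} (hc : ∀ i, 0 ≤ c i)
    (h : ∀ i (k : ℕ), ‖a i + k‖ ≤ c i * ‖b i + k‖) (z : ℂ) :
    ‖pFp a b z‖ ≤ Real.exp ((∏ i, c i) * ‖z‖) := by
  set γ := ∏ i, c i
  have hγ : 0 ≤ γ := prod_nonneg fun i _ => hc i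
  have hexp : HasSum (fun n : ℕ => (γ * ‖z‖) ^ n / n.factorial) (Real.exp (γ * ‖z‖)) := by
    simpa [Real.exp_eq_exp_ℝ] using NormedSpace.expSeries_div_hasSum_exp (γ * ‖z‖)
  refine tsum_of_norm_bounded hexp fun n => ?_
  have hratio : ‖(∏ i, poch (a i) n) / ∏ i, poch (b i) n‖ ≤ γ ^ n := by
    rw [norm_div]
    exact div_le_of_le_mul₀ (norm_nonneg _) (by positivity) (norm_prod_poch_le_pow_mul h n)
  rw [norm_div, norm_mul, norm_pow, Complex.norm_natCast, mul_pow]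
  gcongr

theorem pFp_shifted_bound_general (p : ℕ) (a b : Fin p → ℂ) :
    ∃ C > (0 : ℝ), ∃ γ > (0 : ℝ), ∀ N : ℕ, 0 < N → (∀ j, 0 < (b j + N + 1).re) →
      ∀ ℓ : ℕ, N + 1 ≤ ℓ → ∀ z : ℂ,
        ‖pFp (fun i => a i + ℓ) (fun j => b j + ℓ) z‖
          ≤ C * Real.exp (γ * ‖z‖) := by
  have hc : ∀ i, 1 ≤ shiftRatioBound (a i) (b i) := fun i => one_le_shiftRatioBound _ _
  refine ⟨1, one_pos, ∏ i, shiftRatioBound (a i) (b i),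
    prod_pos fun i _ => one_pos.trans_le (hc i), fun N _ hb ℓ hℓ z => ?_⟩
  rw [one_mul]
  refine norm_pFp_le_exp (fun i => zero_le_one.trans (hc i)) (fun i k => ?_) z
  have hpos : 0 < (b i).re + ↑(ℓ + k) := by
    have hb' : 0 < (b i).re + N + 1 := by simpa using hb i
    have : (N : ℝ) + 1 ≤ ↑(ℓ + k) := by push_cast; exact_mod_cast (by omega : N + 1 ≤ ℓ + k)
    linarith
  simpa [add_assoc] using norm_add_natCast_le_shiftRatioBound_mul (a := a i) hpos

/-- Generalization of Lemma 3: a global estimate for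
`ₚFₚ[a₁+ℓ,…,a_p+ℓ; b₁+ℓ,…,b_p+ℓ; z]`, with constants `C, γ`
independent of `ℓ`, `N` and `z`. -/
theorem pFp_shifted_bound (p : ℕ) (hp : 0 < p) (a b : Fin p → ℂ) :
    ∃ C > (0 : ℝ), ∃ γ > (0 : ℝ), ∀ N : ℕ, 0 < N → (∀ j, 0 < (b j + N + 1).re) →
      ∀ ℓ : ℕ, N + 1 ≤ ℓ → ∀ z : ℂ,
        ‖pFp (fun i => a i + ℓ) (fun j => b j + ℓ) z‖
          ≤ C * Real.exp (γ * ‖z‖) :=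
  pFp_shifted_bound_general p a b
end

section
/- Let a, b, c ∈ ℂ, c' ∈ ℂ ∖ ℤ_{≤0}, a − b ∉ ℤ and a − c ∉ ℤ. Then the series V₁(x,y) := Σ_{n=0}^∞ ((a)_n (c−b)_n / (a−b+1)_n) · ₂F₂[a−c+1, a+n; c', a−b+1+n; y/(1−x)] · (1−x)^{−n}/n! and V₂(x,y) := Σ_{n=0}^∞ ((b)_n (c−a)_n / (b−a+1)_n) · ₂F₂[a−c+1, a−b−n; c', a−c+1−n; y] · (1−x)^{−n}/n! converge absolutely for every x ∈ ℂ with |x − 1| > 1 and every y ∈ ℂ. -/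
/-- The generalized hypergeometric function `₂F₂[a₁, a₂; b₁, b₂; z]`. -/
noncomputable def F22 (a1 a2 b1 b2 z : ℂ) : ℂ :=
  ∑' n : ℕ, poch a1 n * poch a2 n / (poch b1 n * poch b2 n) * z ^ n / Nat.factorial n

/-!
Both series have the shape `∑ (p)ₙ (q)ₙ / (d)ₙ · Fₙ · (1 - x)⁻ⁿ / n!`, where the `₂F₂` factors `Fₙ`
are bounded uniformly in `n`. Indeed, in `Fₙ` the upper parameter `β` exceeds the lower parameter
`γ` by a fixed `u`, and `γ + j` runs through a translate `w + ℤ` that stays at distance `δ > 0`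
from `0`; hence `|(β)ₖ| ≤ (1 + |u|/δ)ᵏ |(γ)ₖ|`, and `Fₙ` is dominated by an entire series of
`₁F₁` type. What remains is a `₂F₁` series at `1/|1 - x| < 1`, summable by the ratio test.
-/

open Filter Topology

theorem summable_of_eq_mul_of_tendsto {g ρ : ℕ → ℝ} {l : ℝ} (hl : |l| < 1)
    (hρ : Tendsto ρ atTop (𝓝 l)) (hg : ∀ n, g (n + 1) = ρ n * g n) : Summable g := by
  obtain ⟨R, hlR, hR⟩ := exists_between hl
  refine summable_of_ratio_norm_eventually_le hR ?_
  filter_upwards [(continuous_abs.tendsto l |>.comp hρ).eventually_le_const hlR] with n hn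
  rw [hg, norm_mul, Real.norm_eq_abs]
  exact mul_le_mul_of_nonneg_right hn (norm_nonneg _)

theorem norm_poch_succ (w : ℂ) (n : ℕ) :
    ‖poch w (n + 1)‖ = ‖poch w n‖ * ‖w + n‖ := by
  rw [poch, Finset.prod_range_succ, norm_mul, poch]

theorem tendsto_norm_add_natCast_div_succ (w : ℂ) :
    Tendsto (fun n : ℕ => ‖w + n‖ / ((n : ℝ) + 1)) atTop (𝓝 1) := by
  have h : Tendsto (fun n : ℕ => ‖1 + (w - 1) * (1 / ((n : ℂ) + 1))‖) atTop (𝓝 1) := by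
    simpa using ((tendsto_one_div_add_atTop_nhds_zero_nat (𝕜 := ℂ)).const_mul (w - 1)
      |>.const_add 1).norm
  refine h.congr fun n => ?_
  have hn : ((n : ℂ) + 1) ≠ 0 := by exact_mod_cast n.succ_ne_zero
  rw [show 1 + (w - 1) * (1 / ((n : ℂ) + 1)) = (w + n) / ((n : ℝ) + 1 : ℝ) by
    push_cast; field_simp; ring, norm_div]
  congr 1
  exact_mod_cast Complex.norm_of_nonneg (by positivity : (0:ℝ) ≤ n + 1)

theorem tendsto_norm_add_natCast_div_norm_add_natCast (v w : ℂ) :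
    Tendsto (fun n : ℕ => ‖v + n‖ / ‖w + n‖) atTop (𝓝 1) := by
  have h := (tendsto_norm_add_natCast_div_succ v).div (tendsto_norm_add_natCast_div_succ w)
    one_ne_zero
  rw [div_one] at h
  exact h.congr fun n => div_div_div_cancel_right₀ (by positivity) _ _

theorem summable_norm_poch_div_poch_mul_pow_div_factorial (α γ : ℂ) (C : ℝ) :
    Summable fun k : ℕ => ‖poch α k‖ / ‖poch γ k‖ * C ^ k / k.factorial := by
  refine summable_of_eq_mul_of_tendsto (l := 0) (by simp)
    (ρ := fun k => ‖α + k‖ / ‖γ + k‖ * (C / (k + 1))) ?_ fun k => ?_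
  · simpa [div_eq_mul_inv] using (tendsto_norm_add_natCast_div_norm_add_natCast α γ).mul
      ((tendsto_one_div_add_atTop_nhds_zero_nat (𝕜 := ℝ)).const_mul C)
  · simp only [norm_poch_succ, Nat.factorial_succ, Nat.cast_mul, Nat.cast_succ, div_eq_mul_inv,
      mul_inv]
    ring

theorem summable_norm_poch_mul_poch_div_poch_mul_pow_div_factorial (p q d : ℂ) {r : ℝ}
    (hr : |r| < 1) :
    Summable fun n : ℕ => ‖poch p n‖ * ‖poch q n‖ / ‖poch d n‖ * r ^ n / n.factorial := by
  refine summable_of_eq_mul_of_tendsto hr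
    (ρ := fun n => ‖p + n‖ / (n + 1) * (‖q + n‖ / ‖d + n‖) * r) ?_ fun n => ?_
  · simpa using ((tendsto_norm_add_natCast_div_succ p).mul
      (tendsto_norm_add_natCast_div_norm_add_natCast q d)).mul_const r
  · simp only [norm_poch_succ, Nat.factorial_succ, Nat.cast_mul, Nat.cast_succ, div_eq_mul_inv,
      mul_inv]
    ring

theorem exists_pos_forall_le_norm_add_intCast {w : ℂ} (hw : ∀ m : ℤ, w + m ≠ 0) :
    ∃ δ > 0, ∀ m : ℤ, δ ≤ ‖w + m‖ := by
  have hlim : Tendsto (fun m : ℤ => ‖w + m‖) cofinite atTop := by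
    refine tendsto_atTop_mono (fun m => ?_) <| tendsto_atTop_add_const_right _ (-‖w‖)
      (tendsto_norm_cocompact_atTop.comp Int.tendsto_coe_cofinite)
    have h := norm_sub_le (w + m) w
    rw [add_sub_cancel_left, Complex.norm_intCast] at h
    simp only [Function.comp_apply, Real.norm_eq_abs]
    linarith
  obtain ⟨m₀, hm₀⟩ := hlim.exists_forall_le
  exact ⟨_, norm_pos_iff.mpr (hw m₀), hm₀⟩

theorem norm_add_le_mul_norm_of_le_norm {E : Type*} [SeminormedAddCommGroup E] {u v : E} {δ : ℝ}
    (hδ : 0 < δ) (hv : δ ≤ ‖v‖) : ‖v + u‖ ≤ (1 + ‖u‖ / δ) * ‖v‖ := by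
  have : ‖u‖ ≤ ‖u‖ / δ * ‖v‖ := by
    rw [div_mul_eq_mul_div, le_div_iff₀ hδ]
    exact mul_le_mul_of_nonneg_left hv (norm_nonneg u)
  linarith [norm_add_le v u]

theorem norm_poch_le_pow_mul_s7 {β γ : ℂ} {K : ℝ} (h : ∀ j : ℕ, ‖β + j‖ ≤ K * ‖γ + j‖)
    (k : ℕ) : ‖poch β k‖ ≤ K ^ k * ‖poch γ k‖ := by
  rw [poch, poch, norm_prod, norm_prod]
  calc ∏ i ∈ Finset.range k, ‖β + i‖ ≤ ∏ i ∈ Finset.range k, K * ‖γ + i‖ :=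
        Finset.prod_le_prod (fun i _ => norm_nonneg _) fun i _ => h i
    _ = K ^ k * ∏ i ∈ Finset.range k, ‖γ + i‖ := by
        rw [Finset.prod_mul_distrib, Finset.prod_const, Finset.card_range]

theorem norm_F22_le (α β c' γ z : ℂ) {K : ℝ} (hK : 0 ≤ K)
    (h : ∀ j : ℕ, ‖β + j‖ ≤ K * ‖γ + j‖) :
    ‖F22 α β c' γ z‖ ≤
      ∑' k : ℕ, ‖poch α k‖ / ‖poch c' k‖ * (K * ‖z‖) ^ k / k.factorial := by
  refine tsum_of_norm_bounded
    (summable_norm_poch_div_poch_mul_pow_div_factorial α c' _).hasSum fun k => ?_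
  have hβγ : ‖poch β k‖ / ‖poch γ k‖ ≤ K ^ k :=
    div_le_of_le_mul₀ (norm_nonneg _) (by positivity) (norm_poch_le_pow_mul_s7 h k)
  calc ‖poch α k * poch β k / (poch c' k * poch γ k) * z ^ k / k.factorial‖
      = ‖poch α k‖ / ‖poch c' k‖ * (‖poch β k‖ / ‖poch γ k‖) * ‖z‖ ^ k / k.factorial := by
        simp only [norm_div, norm_mul, norm_pow, Complex.norm_natCast]
        ring
    _ ≤ ‖poch α k‖ / ‖poch c' k‖ * K ^ k * ‖z‖ ^ k / k.factorial := by gcongr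
    _ = ‖poch α k‖ / ‖poch c' k‖ * (K * ‖z‖) ^ k / k.factorial := by ring

theorem exists_forall_norm_F22_add_intCast_le (α c' z w u : ℂ) (hw : ∀ m : ℤ, w + m ≠ 0) :
    ∃ M, ∀ m : ℤ, ‖F22 α (w + m + u) c' (w + m) z‖ ≤ M := by
  obtain ⟨δ, hδ, hδw⟩ := exists_pos_forall_le_norm_add_intCast hw
  refine ⟨_, fun m =>
    norm_F22_le α _ c' _ z (K := 1 + ‖u‖ / δ) (by positivity) fun j => ?_⟩
  calc ‖w + m + u + j‖ = ‖(w + ((m + j : ℤ) : ℂ)) + u‖ := by push_cast; ring_nf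
    _ ≤ (1 + ‖u‖ / δ) * ‖w + ((m + j : ℤ) : ℂ)‖ :=
        norm_add_le_mul_norm_of_le_norm hδ (hδw _)
    _ = (1 + ‖u‖ / δ) * ‖w + m + j‖ := by push_cast; ring_nf

theorem summable_norm_poch_mul_poch_div_poch_mul_zpow_of_bounded (p q d : ℂ) {F : ℕ → ℂ}
    {M : ℝ} (hF : ∀ n, ‖F n‖ ≤ M) {w : ℂ} (hw : 1 < ‖w‖) :
    Summable fun n : ℕ =>
      ‖poch p n * poch q n / poch d n * F n * w ^ (-(n : ℤ)) / n.factorial‖ := by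
  have hr : |‖w‖⁻¹| < 1 := by
    rw [abs_inv, abs_norm]
    exact inv_lt_one_of_one_lt₀ hw
  refine ((summable_norm_poch_mul_poch_div_poch_mul_pow_div_factorial p q d hr).mul_left M
    ).of_nonneg_of_le (fun n => norm_nonneg _) fun n => ?_
  simp only [norm_div, norm_mul, zpow_neg, zpow_natCast, norm_inv, norm_pow, inv_pow,
    Complex.norm_natCast]
  calc _ = ‖F n‖ * (‖poch p n‖ * ‖poch q n‖ / ‖poch d n‖ * (‖w‖ ^ n)⁻¹ / n.factorial) := by
        ring
    _ ≤ _ := by gcongr; exact hF n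

theorem V1_V2_abs_convergent_general (a b c c' : ℂ)
    (hab : ∀ m : ℤ, a - b ≠ (m : ℂ)) (hac : ∀ m : ℤ, a - c ≠ (m : ℂ))
    (x y : ℂ) (hx : 1 < ‖x - 1‖) :
    Summable (fun n : ℕ => ‖poch a n * poch (c - b) n / poch (a - b + 1) n *
        F22 (a - c + 1) (a + n) c' (a - b + 1 + n) (y / (1 - x)) * (1 - x) ^ (-(n : ℤ)) /
          Nat.factorial n‖) ∧
    Summable (fun n : ℕ => ‖poch b n * poch (c - a) n / poch (b - a + 1) n *
        F22 (a - c + 1) (a - b - n) c' (a - c + 1 - n) y * (1 - x) ^ (-(n : ℤ)) /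
          Nat.factorial n‖) := by
  have h1x : 1 < ‖1 - x‖ := by rwa [norm_sub_rev]
  obtain ⟨M₁, hM₁⟩ := exists_forall_norm_F22_add_intCast_le (a - c + 1) c' (y / (1 - x))
    (a - b + 1) (b - 1) fun m h => hab (-(m + 1)) (by push_cast; linear_combination h)
  obtain ⟨M₂, hM₂⟩ := exists_forall_norm_F22_add_intCast_le (a - c + 1) c' y
    (a - c + 1) (c - b - 1) fun m h => hac (-(m + 1)) (by push_cast; linear_combination h)
  constructor
  · refine summable_norm_poch_mul_poch_div_poch_mul_zpow_of_bounded _ _ _ (M := M₁)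
      (fun n => ?_) h1x
    convert hM₁ n using 3 <;> push_cast <;> ring
  · refine summable_norm_poch_mul_poch_div_poch_mul_zpow_of_bounded _ _ _ (M := M₂)
      (fun n => ?_) h1x
    convert hM₂ (-n) using 3 <;> push_cast <;> ring

/-- The series `V₁(x,y)` and `V₂(x,y)` converge absolutely for `|x-1| > 1` and all `y`. -/
theorem V1_V2_abs_convergent (a b c c' : ℂ)
    (hc' : ∀ m : ℕ, c' ≠ -(m : ℂ))
    (hab : ∀ m : ℤ, a - b ≠ (m : ℂ)) (hac : ∀ m : ℤ, a - c ≠ (m : ℂ))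
    (x y : ℂ) (hx : 1 < ‖x - 1‖) :
    Summable (fun n : ℕ => ‖poch a n * poch (c - b) n / poch (a - b + 1) n *
        F22 (a - c + 1) (a + n) c' (a - b + 1 + n) (y / (1 - x)) * (1 - x) ^ (-(n : ℤ)) /
          Nat.factorial n‖) ∧
    Summable (fun n : ℕ => ‖poch b n * poch (c - a) n / poch (b - a + 1) n *
        F22 (a - c + 1) (a - b - n) c' (a - c + 1 - n) y * (1 - x) ^ (-(n : ℤ)) /
          Nat.factorial n‖) :=
  V1_V2_abs_convergent_general a b c c' hab hac x y hx
end

section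
/- Let a, b ∈ ℂ and c, d ∈ ℂ ∖ ℤ_{≤0}. Then for every z ∈ ℂ, ₂F₂[a, b; c, d; z] = Σ_{k=0}^∞ ((a)_k (d−b)_k)/((c)_k (d)_k) · (−z)^k/k! · ₁F₁[a+k; c+k; z], where the series on the right converges. -/
/-- The confluent hypergeometric function `₁F₁[a; b; z]`. -/
noncomputable def F11 (a b z : ℂ) : ℂ :=
  ∑' n : ℕ, poch a n / poch b n * z ^ n / Nat.factorial n

open Finset Polynomial Filter Nat

theorem Summable.tsum_eq_tsum_sum_antidiagonal {A α : Type*} [AddMonoid A] [HasAntidiagonal A]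
    [AddCommMonoid α] [TopologicalSpace α] [ContinuousAdd α] [T3Space α]
    {f : A × A → α} (hf : Summable f) :
    ∑' p, f p = ∑' n, ∑ p ∈ antidiagonal n, f p := by
  conv_rhs => congr; ext; rw [← sum_finset_coe, ← tsum_fintype (L := .unconditional _)]
  rw [← HasAntidiagonal.sigmaAntidiagonalEquivProd.tsum_eq f]
  exact (HasAntidiagonal.sigmaAntidiagonalEquivProd.summable_iff.mpr hf).tsum_sigma'
    fun n => (hasSum_fintype _).summable

theorem poch_eq_eval_ascPochhammer (a : ℂ) (n : ℕ) :
    poch a n = (ascPochhammer ℂ n).eval a := by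
  induction n with
  | zero => simp [poch]
  | succ n ih => rw [poch, prod_range_succ, ← poch, ih, ascPochhammer_succ_eval]

theorem poch_eq_smeval_descPochhammer (a : ℂ) (n : ℕ) :
    poch a n = (descPochhammer ℤ n).smeval (a + n - 1) := by
  rw [descPochhammer_smeval_eq_ascPochhammer, ascPochhammer_smeval_eq_eval,
    poch_eq_eval_ascPochhammer]
  ring_nf

theorem poch_neg_sub_add_one (x : ℂ) (n : ℕ) : poch (-x - n + 1) n = (-1) ^ n * poch x n := by
  rw [poch, poch, ← prod_range_reflect, ← card_range n, ← prod_const, card_range,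
    ← prod_mul_distrib]
  refine prod_congr rfl fun i hi => ?_
  have hi : i < n := mem_range.mp hi
  rw [Nat.cast_sub (by omega : i ≤ n - 1), Nat.cast_sub (by omega : 1 ≤ n)]
  ring

theorem poch_add (a : ℂ) (m n : ℕ) : poch a (m + n) = poch a m * poch (a + m) n := by
  simp only [poch, prod_range_add, Nat.cast_add, add_assoc]

theorem poch_ne_zero {c : ℂ} (hc : ∀ m : ℕ, c ≠ -(m : ℂ)) (n : ℕ) : poch c n ≠ 0 :=
  prod_ne_zero_iff.mpr fun m _ h => hc m (eq_neg_of_add_eq_zero_left h)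

theorem sum_antidiagonal_choose_mul_poch (x y : ℂ) (N : ℕ) :
    ∑ ij ∈ antidiagonal N,
        (N.choose ij.1 : ℂ) * ((-1) ^ ij.1 * poch x ij.1 * poch (y + ij.1) ij.2)
      = poch (y - x) N := by
  -- Vandermonde's identity for falling factorials, evaluated at `-x + (y + N - 1)`
  rw [poch_eq_smeval_descPochhammer, show y - x + N - 1 = -x + (y + N - 1) by ring,
    Ring.descPochhammer_smeval_add _ (Commute.all _ _)]
  refine sum_congr rfl fun ⟨i, j⟩ hij => ?_
  rw [HasAntidiagonal.mem_antidiagonal] at hij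
  subst hij
  rw [← poch_neg_sub_add_one, poch_eq_smeval_descPochhammer, poch_eq_smeval_descPochhammer,
    show -x - i + 1 + i - 1 = -x by ring, Nat.cast_add,
    show y + i + j - 1 = y + (i + j) - 1 by ring]

theorem sum_antidiagonal_poch_div_poch (b d : ℂ) (hd : ∀ m : ℕ, d ≠ -(m : ℂ)) (N : ℕ) :
    ∑ ij ∈ antidiagonal N, (-1) ^ ij.1 * (poch (d - b) ij.1 / poch d ij.1) / (ij.1 ! * ij.2 !)
      = poch b N / poch d N / N ! := by
  rw [eq_div_iff (Nat.cast_ne_zero.mpr N.factorial_ne_zero),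
    eq_div_iff (poch_ne_zero hd N), sum_mul, sum_mul]
  nth_rw 2 [← sub_sub_cancel d b]
  rw [← sum_antidiagonal_choose_mul_poch (d - b) d N]
  refine sum_congr rfl fun ⟨i, j⟩ hij => ?_
  rw [HasAntidiagonal.mem_antidiagonal] at hij
  subst hij
  have hdi := poch_ne_zero hd i
  have hi := Nat.cast_ne_zero (R := ℂ) |>.mpr i.factorial_ne_zero
  have hj := Nat.cast_ne_zero (R := ℂ) |>.mpr j.factorial_ne_zero
  rw [poch_add, ← Nat.add_choose_mul_factorial_mul_factorial, Nat.choose_symm_add]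
  push_cast
  field_simp

theorem exists_norm_poch_div_le_pow (a c : ℂ) (hc : ∀ m : ℕ, c ≠ -(m : ℂ)) :
    ∃ K : ℝ, 0 ≤ K ∧ ∀ n, ‖poch a n / poch c n‖ ≤ K ^ n := by
  have hpos : ∀ m : ℕ, 0 < ‖c + m‖ := fun m =>
    norm_pos_iff.mpr fun h => hc m (eq_neg_of_add_eq_zero_left h)
  -- `‖c + m‖` attains a positive minimum, and `‖a + m‖ ≤ ‖a - c‖ + ‖c + m‖`
  have htend : Tendsto (fun m : ℕ => ‖c + m‖) cofinite atTop := by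
    rw [Nat.cofinite_eq_atTop]
    refine tendsto_atTop_mono (fun m : ℕ => ?_)
      (tendsto_atTop_add_const_right _ (-‖c‖) tendsto_natCast_atTop_atTop)
    have := norm_add_le (c + m) (-c)
    simp only [add_neg_cancel_comm, Complex.norm_natCast, norm_neg] at this
    linarith
  obtain ⟨m₀, hm₀⟩ := htend.exists_forall_le
  refine ⟨1 + ‖a - c‖ / ‖c + m₀‖, by positivity, fun n => ?_⟩
  rw [poch, poch, ← prod_div_distrib, norm_prod]
  refine (prod_le_prod (fun _ _ => norm_nonneg _) fun m _ => ?_).trans_eq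
    (by rw [prod_const, card_range])
  rw [norm_div, div_le_iff₀ (hpos m)]
  calc ‖a + m‖ = ‖(a - c) + (c + m)‖ := by ring_nf
    _ ≤ ‖a - c‖ + ‖c + m‖ := norm_add_le _ _
    _ ≤ ‖a - c‖ * (‖c + m‖ / ‖c + m₀‖) + ‖c + m‖ := by
        gcongr
        exact le_mul_of_one_le_right (norm_nonneg _) ((one_le_div (hpos m₀)).mpr (hm₀ m))
    _ = (1 + ‖a - c‖ / ‖c + m₀‖) * ‖c + m‖ := by ring

noncomputable def lukeTerm (a b c d z : ℂ) (p : ℕ × ℕ) : ℂ :=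
  poch a p.1 * poch (d - b) p.1 / (poch c p.1 * poch d p.1) * (-z) ^ p.1 / p.1 ! *
    (poch (a + p.1) p.2 / poch (c + p.1) p.2 * z ^ p.2 / p.2 !)

theorem lukeTerm_eq (a b c d z : ℂ) (k n : ℕ) :
    lukeTerm a b c d z (k, n) = poch a (k + n) / poch c (k + n) * z ^ (k + n) *
      ((-1) ^ k * (poch (d - b) k / poch d k) / (k ! * n !)) := by
  simp only [lukeTerm, poch_add, neg_pow z, pow_add, div_eq_mul_inv, mul_inv]
  ring

theorem summable_lukeTerm (a b c d z : ℂ) (hc : ∀ m : ℕ, c ≠ -(m : ℂ))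
    (hd : ∀ m : ℕ, d ≠ -(m : ℂ)) : Summable (lukeTerm a b c d z) := by
  obtain ⟨K, hK₀, hK⟩ := exists_norm_poch_div_le_pow a c hc
  obtain ⟨L, hL₀, hL⟩ := exists_norm_poch_div_le_pow (d - b) d hd
  refine Summable.of_norm_bounded
    (g := fun p : ℕ × ℕ => (K * L * ‖z‖) ^ p.1 / p.1 ! * ((K * ‖z‖) ^ p.2 / p.2 !))
    (Summable.mul_of_nonneg (Real.summable_pow_div_factorial _)
      (Real.summable_pow_div_factorial _) (fun _ => by positivity) fun _ => by positivity)
    fun ⟨k, n⟩ => ?_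
  rw [lukeTerm_eq]
  simp only [norm_mul, norm_div, norm_pow, norm_neg, norm_one, one_pow, one_mul,
    Complex.norm_natCast]
  calc _ ≤ K ^ (k + n) * ‖z‖ ^ (k + n) * (L ^ k / (k ! * n !)) := by
        gcongr
        · exact (norm_div _ _).symm.trans_le (hK _)
        · exact (norm_div _ _).symm.trans_le (hL _)
    _ = _ := by ring

theorem sum_antidiagonal_lukeTerm (a b c d z : ℂ) (hd : ∀ m : ℕ, d ≠ -(m : ℂ)) (N : ℕ) :
    ∑ p ∈ antidiagonal N, lukeTerm a b c d z p
      = poch a N * poch b N / (poch c N * poch d N) * z ^ N / N ! := by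
  calc ∑ p ∈ antidiagonal N, lukeTerm a b c d z p
      = poch a N / poch c N * z ^ N * ∑ ij ∈ antidiagonal N,
          (-1) ^ ij.1 * (poch (d - b) ij.1 / poch d ij.1) / (ij.1 ! * ij.2 !) := by
        rw [mul_sum]
        refine sum_congr rfl fun ⟨k, n⟩ hkn => ?_
        rw [lukeTerm_eq, HasAntidiagonal.mem_antidiagonal.mp hkn]
    _ = _ := by
        rw [sum_antidiagonal_poch_div_poch b d hd]
        simp only [div_eq_mul_inv, mul_inv]
        ring

/-- Luke-type expansion (4.4) of the paper:
`₂F₂[a,b;c,d;z] = Σ_k (a)_k (d−b)_k / ((c)_k (d)_k) (−z)^k/k! ₁F₁[a+k; c+k; z]`. -/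
theorem F22_Luke_expansion (a b c d : ℂ)
    (hc : ∀ m : ℕ, c ≠ -(m : ℂ)) (hd : ∀ m : ℕ, d ≠ -(m : ℂ)) (z : ℂ) :
    Summable (fun k : ℕ => poch a k * poch (d - b) k / (poch c k * poch d k) *
      (-z) ^ k / Nat.factorial k * F11 (a + k) (c + k) z) ∧
    F22 a b c d z = ∑' k : ℕ, poch a k * poch (d - b) k / (poch c k * poch d k) *
      (-z) ^ k / Nat.factorial k * F11 (a + k) (c + k) z := by
  have hsum := summable_lukeTerm a b c d z hc hd
  have hrow : ∀ k : ℕ, poch a k * poch (d - b) k / (poch c k * poch d k) *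
      (-z) ^ k / Nat.factorial k * F11 (a + k) (c + k) z = ∑' n, lukeTerm a b c d z (k, n) :=
    fun k => by rw [F11, ← tsum_mul_left]; rfl
  simp only [hrow]
  refine ⟨hsum.prod, ?_⟩
  calc F22 a b c d z = ∑' N, ∑ p ∈ antidiagonal N, lukeTerm a b c d z p :=
        tsum_congr fun N => (sum_antidiagonal_lukeTerm a b c d z hd N).symm
    _ = ∑' p, lukeTerm a b c d z p := hsum.tsum_eq_tsum_sum_antidiagonal.symm
    _ = ∑' k, ∑' n, lukeTerm a b c d z (k, n) := hsum.tsum_prod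
end
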